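/- arXiv:1906.10023 — 4 statements merged into one kernel-verified Lean document; each statement's English description precedes it below -/
import Mathlib

section
/- Let m ≥ 1 and let ρ₀, ρ₁, …, ρ_m be positive semidefinite complex k×k matrices, each of trace 1, which are supported on pairwise orthogonal subspaces (i.e. ρ_i · ρ_j = 0 whenever i ≠ j). Let p, q be nonnegative reals with p + q = 1, and set ρ = p·ρ₀ + (q/m)·∑_{l=1}^{m} ρ_l. Then the trace norm of ρ − ρ₀ equals 2q, i.e. ‖ρ − ρ₀‖₁ = 2q. -/
open Matrix
open scoped ComplexOrder

/-- The positive semidefinite square root of a positive semidefinite matrix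
(the definition `Matrix.PosSemidef.sqrt` of the older Mathlib, since removed). -/
noncomputable def Matrix.PosSemidef.sqrt {n 𝕜 : Type*} [Fintype n] [DecidableEq n] [RCLike 𝕜]
    {A : Matrix n n 𝕜} (hA : A.PosSemidef) : Matrix n n 𝕜 :=
  hA.1.eigenvectorUnitary.1 * diagonal ((↑) ∘ (√·) ∘ hA.1.eigenvalues) *
  (star hA.1.eigenvectorUnitary : Matrix n n 𝕜)

/-- The trace norm of a complex square matrix: `‖X‖₁ = tr[(X·Xᴴ)^{1/2}]`
(real part of the trace of the positive semidefinite square root of `X * Xᴴ`). -/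
noncomputable def traceNorm {k : ℕ} (X : Matrix (Fin k) (Fin k) ℂ) : ℝ :=
  ((Matrix.posSemidef_self_mul_conjTranspose X).sqrt.trace).re
/-!
With `σ = ∑_{l ≥ 1} ρ_l`, the matrix is `(q/m)·σ − q·ρ₀`, a difference `A − B` of positive
semidefinite matrices with `A·B = B·A = 0`. Then `(A − B)(A − B)ᴴ = (A + B)²`, so the square root
is `A + B` and the trace norm is `tr A + tr B = q + q`.
-/

open scoped MatrixOrder in
theorem Matrix.PosSemidef.sqrt_eq_cfcSqrt {n 𝕜 : Type*} [Fintype n] [DecidableEq n] [RCLike 𝕜]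
    {A : Matrix n n 𝕜} (hA : A.PosSemidef) : hA.sqrt = CFC.sqrt A := by
  rw [CFC.sqrt_eq_real_sqrt _ hA.nonneg, cfcₙ_eq_cfc, hA.1.cfc_eq]
  simp [Matrix.PosSemidef.sqrt, Matrix.IsHermitian.cfc, Unitary.conjStarAlgAut_apply]

open scoped MatrixOrder in
theorem Matrix.PosSemidef.sqrt_eq_of_mul_self {n 𝕜 : Type*} [Fintype n] [DecidableEq n] [RCLike 𝕜]
    {A B : Matrix n n 𝕜} (hA : A.PosSemidef) (hB : B.PosSemidef) (h : B * B = A) :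
    hA.sqrt = B := by
  rw [hA.sqrt_eq_cfcSqrt, CFC.sqrt_unique h hB.nonneg]

theorem traceNorm_sub_of_mul_eq_zero {k : ℕ} {A B : Matrix (Fin k) (Fin k) ℂ}
    (hA : A.PosSemidef) (hB : B.PosSemidef) (hAB : A * B = 0) :
    traceNorm (A - B) = (A.trace + B.trace).re := by
  have hBA : B * A = 0 := by
    rw [← hA.1.eq, ← hB.1.eq, ← conjTranspose_mul, hAB, conjTranspose_zero]
  have hsq : (A + B) * (A + B) = (A - B) * (A - B)ᴴ := by
    rw [conjTranspose_sub, hA.1.eq, hB.1.eq]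
    simp only [add_mul, mul_add, sub_mul, mul_sub, hAB, hBA]
    abel
  rw [traceNorm, (posSemidef_self_mul_conjTranspose _).sqrt_eq_of_mul_self (hA.add hB) hsq,
    trace_add]

theorem traceNorm_mixture_sub_leading_general {k m : ℕ} (hm : 1 ≤ m)
    (ρ : Fin (m + 1) → Matrix (Fin k) (Fin k) ℂ)
    (hpsd : ∀ i, (ρ i).PosSemidef) (htr : ∀ i, (ρ i).trace = 1)
    (horth : ∀ i j, i ≠ j → ρ i * ρ j = 0)
    (p q : ℝ) (hq : 0 ≤ q) (hpq : p + q = 1) :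
    traceNorm ((p • ρ 0 + (q / m) • ∑ l ∈ Finset.univ.erase 0, ρ l) - ρ 0) = 2 * q := by
  set σ := ∑ l ∈ Finset.univ.erase 0, ρ l
  have hσ : σ.PosSemidef := posSemidef_sum _ fun l _ => hpsd l
  have hσρ : σ * ρ 0 = 0 := by
    rw [Finset.sum_mul]
    exact Finset.sum_eq_zero fun l hl => horth l 0 (Finset.ne_of_mem_erase hl)
  have htrσ : σ.trace = m := by simp [σ, trace_sum, htr]
  have hdiff : (p • ρ 0 + (q / m) • σ) - ρ 0 = (q / m) • σ - q • ρ 0 := by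
    rw [show p = 1 - q by linarith]; module
  rw [hdiff, traceNorm_sub_of_mul_eq_zero (hσ.smul (by positivity)) ((hpsd 0).smul hq)
    (by rw [smul_mul_smul_comm, hσρ, smul_zero]), trace_smul, trace_smul, htrσ, htr 0]
  have hm0 : (m : ℂ) ≠ 0 := Nat.cast_ne_zero.mpr (by omega)
  rw [Complex.real_smul, Complex.real_smul, Complex.ofReal_div, Complex.ofReal_natCast,
    div_mul_cancel₀ _ hm0, mul_one, ← Complex.ofReal_add, Complex.ofReal_re, two_mul]

/-- Lemma 1: a mixture `ρ = p·ρ₀ + (q/m)·∑_{l=1}^m ρ_l` of density matrices supported on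
pairwise orthogonal subspaces satisfies `‖ρ − ρ₀‖₁ = 2q`. -/
theorem traceNorm_mixture_sub_leading {k m : ℕ} (hm : 1 ≤ m)
    (ρ : Fin (m + 1) → Matrix (Fin k) (Fin k) ℂ)
    (hpsd : ∀ i, (ρ i).PosSemidef) (htr : ∀ i, (ρ i).trace = 1)
    (horth : ∀ i j, i ≠ j → ρ i * ρ j = 0)
    (p q : ℝ) (hp : 0 ≤ p) (hq : 0 ≤ q) (hpq : p + q = 1) :
    traceNorm ((p • ρ 0 + (q / m) • ∑ l ∈ Finset.univ.erase 0, ρ l) - ρ 0) = 2 * q :=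
  traceNorm_mixture_sub_leading_general hm ρ hpsd htr horth p q hq hpq
end

section
/- Let n ≥ 2 and k ≥ 1 be natural numbers, and let c, s be nonnegative real numbers. Consider the complex (n·k)×(n·k) matrix Y = I_n ⊗ (c·I_k) + (J_n − I_n) ⊗ (s·J_k), where I_m denotes the m×m identity matrix, J_m denotes the m×m matrix all of whose entries equal 1, and ⊗ is the Kronecker product; that is, Y is the n×n block matrix with diagonal blocks c·I_k and all off-diagonal blocks s·J_k. Then Y is positive semidefinite if and only if c ≥ s·k. -/
/-!
Write `J` for all-ones matrices. Then
`Y = (c - s k) • (1 ⊗ 1) + s • (1 ⊗ (k • 1 - J_k)) + s • (J_n ⊗ J_k)`.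
The last two summands are positive semidefinite (`J` is a Gram matrix and `k • 1 - J_k` is `k`
times an orthogonal projection), which gives sufficiency. Conversely, for `v ≠ 0` with
`∑ i, v i = 0` (it exists because `n ≥ 2`), the vector `v ⊗ 1` lies in the kernel of both
summands, so it is an eigenvector of `Y` with eigenvalue `c - s k`, which must be nonnegative.
-/

open Matrix
open scoped Kronecker ComplexOrder

/-- The `m × m` all-ones matrix. -/
def allOnes (m : ℕ) : Matrix (Fin m) (Fin m) ℂ := Matrix.of fun _ _ => 1

namespace Matrix

variable {𝕜 : Type*} [RCLike 𝕜] {m : Type*} [Fintype m]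

theorem PosSemidef.nonneg_of_mulVec_eq_smul {A : Matrix m m 𝕜} (hA : A.PosSemidef)
    {x : m → 𝕜} (hx : x ≠ 0) {μ : ℝ} (hμ : A *ᵥ x = (μ : 𝕜) • x) : 0 ≤ μ := by
  obtain ⟨q, hq, hqx⟩ := RCLike.pos_iff_exists_ofReal.mp (dotProduct_star_self_pos_iff.mpr hx)
  have hquad : (0 : 𝕜) ≤ ((μ * q : ℝ) : 𝕜) := by
    simpa [hμ, ← hqx] using hA.dotProduct_mulVec_nonneg x
  exact nonneg_of_mul_nonneg_left (RCLike.ofReal_nonneg.mp hquad) hq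

theorem posSemidef_of_isHermitian_of_mul_self_eq_smul {A : Matrix m m 𝕜} {r : ℝ} (hr : 0 < r)
    (hA : A.IsHermitian) (hAA : A * A = (r : 𝕜) • A) : A.PosSemidef := by
  have h : A = (r⁻¹ : ℝ) • (Aᴴ * A) := by
    rw [hA.eq, hAA, ← RCLike.real_smul_eq_coe_smul, smul_smul, inv_mul_cancel₀ hr.ne', one_smul]
  rw [h]
  exact (posSemidef_conjTranspose_mul_self A).smul (inv_nonneg.mpr hr.le)

theorem kronecker_mulVec_mul {R l n p q : Type*} [CommSemiring R] [Fintype n] [Fintype q]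
    (A : Matrix l n R) (B : Matrix p q R) (v : n → R) (w : q → R) :
    (A ⊗ₖ B) *ᵥ (fun i => v i.1 * w i.2) = fun i => (A *ᵥ v) i.1 * (B *ᵥ w) i.2 := by
  ext ⟨i, j⟩
  simp only [mulVec, dotProduct, kroneckerMap_apply, Fintype.sum_prod_type, Finset.sum_mul_sum]
  exact Finset.sum_congr rfl fun _ _ => Finset.sum_congr rfl fun _ _ => by ring

end Matrix

section allOnes

variable {m : ℕ}

theorem allOnes_eq_vecMulVec : allOnes m = vecMulVec (star 1) 1 := by
  ext; simp [allOnes, vecMulVec]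

theorem allOnes_mulVec (v : Fin m → ℂ) : allOnes m *ᵥ v = fun _ => ∑ i, v i := by
  ext; simp [allOnes, mulVec, dotProduct]

theorem allOnes_mul_self : allOnes m * allOnes m = (m : ℂ) • allOnes m := by
  ext; simp [allOnes, mul_apply]

theorem posSemidef_allOnes : (allOnes m).PosSemidef := by
  rw [allOnes_eq_vecMulVec]; exact posSemidef_vecMulVec_star_self 1

theorem isHermitian_natCast_smul_one_sub_allOnes :
    ((m : ℂ) • (1 : Matrix (Fin m) (Fin m) ℂ) - allOnes m).IsHermitian :=
  (isHermitian_one.smul (by simp)).sub posSemidef_allOnes.isHermitian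

theorem natCast_smul_one_sub_allOnes_mul_self :
    ((m : ℂ) • (1 : Matrix (Fin m) (Fin m) ℂ) - allOnes m) *
      ((m : ℂ) • (1 : Matrix (Fin m) (Fin m) ℂ) - allOnes m) =
      (m : ℂ) • ((m : ℂ) • (1 : Matrix (Fin m) (Fin m) ℂ) - allOnes m) := by
  simp only [mul_sub, sub_mul, smul_mul_assoc, mul_smul_comm, one_mul,
    mul_one, allOnes_mul_self]
  module

theorem posSemidef_natCast_smul_one_sub_allOnes :
    ((m : ℂ) • (1 : Matrix (Fin m) (Fin m) ℂ) - allOnes m).PosSemidef := by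
  rcases m.eq_zero_or_pos with rfl | hm
  · convert PosSemidef.zero
    exact Subsingleton.elim _ _
  · exact posSemidef_of_isHermitian_of_mul_self_eq_smul (r := m) (by exact_mod_cast hm)
      isHermitian_natCast_smul_one_sub_allOnes
      (by simpa using natCast_smul_one_sub_allOnes_mul_self)

theorem natCast_smul_one_sub_allOnes_mulVec_one :
    ((m : ℂ) • (1 : Matrix (Fin m) (Fin m) ℂ) - allOnes m) *ᵥ 1 = 0 := by
  ext; simp [sub_mulVec, smul_mulVec, allOnes_mulVec]

end allOnes

theorem exists_ne_zero_sum_eq_zero {R ι : Type*} [Ring R] [Nontrivial R] [Fintype ι]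
    [DecidableEq ι] (h : 1 < Fintype.card ι) : ∃ v : ι → R, v ≠ 0 ∧ ∑ i, v i = 0 := by
  obtain ⟨i, j, hij⟩ := Fintype.exists_pair_of_one_lt_card h
  refine ⟨Pi.single i 1 - Pi.single j 1, fun hv => ?_, by simp [Finset.sum_sub_distrib]⟩
  simpa [hij] using congrFun hv i

theorem block_identity_allOnes_eq (n k : ℕ) (c s : ℝ) :
    (1 : Matrix (Fin n) (Fin n) ℂ) ⊗ₖ ((c : ℂ) • (1 : Matrix (Fin k) (Fin k) ℂ))
      + (allOnes n - 1) ⊗ₖ ((s : ℂ) • allOnes k) =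
    ((c - s * k : ℝ) : ℂ) • ((1 : Matrix (Fin n) (Fin n) ℂ) ⊗ₖ (1 : Matrix (Fin k) (Fin k) ℂ))
      + (s : ℂ) • ((1 : Matrix (Fin n) (Fin n) ℂ) ⊗ₖ ((k : ℂ) • 1 - allOnes k))
      + (s : ℂ) • (allOnes n ⊗ₖ allOnes k) := by
  ext ⟨i, j⟩ ⟨i', j'⟩
  simp only [Matrix.add_apply, Matrix.smul_apply, Matrix.sub_apply, kroneckerMap_apply, one_apply,
    allOnes, of_apply, smul_eq_mul]
  split_ifs <;> push_cast <;> ring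

theorem block_identity_allOnes_mulVec_of_sum_eq_zero {n k : ℕ} (c s : ℝ) {v : Fin n → ℂ}
    (hv : ∑ i, v i = 0) :
    ((1 : Matrix (Fin n) (Fin n) ℂ) ⊗ₖ ((c : ℂ) • (1 : Matrix (Fin k) (Fin k) ℂ))
      + (allOnes n - 1) ⊗ₖ ((s : ℂ) • allOnes k)) *ᵥ (fun p => v p.1 * (1 : Fin k → ℂ) p.2) =
    ((c - s * k : ℝ) : ℂ) • fun p => v p.1 * (1 : Fin k → ℂ) p.2 := by
  rw [block_identity_allOnes_eq]
  simp only [add_mulVec, smul_mulVec, kronecker_mulVec_mul, one_mulVec,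
    natCast_smul_one_sub_allOnes_mulVec_one, allOnes_mulVec, hv]
  ext p
  simp

theorem posSemidef_block_identity_allOnes_iff_general (n k : ℕ) (hn : 2 ≤ n) (hk : 1 ≤ k)
    (c s : ℝ) (hs : 0 ≤ s) :
    ((1 : Matrix (Fin n) (Fin n) ℂ) ⊗ₖ ((c : ℂ) • (1 : Matrix (Fin k) (Fin k) ℂ))
      + (allOnes n - 1) ⊗ₖ ((s : ℂ) • allOnes k)).PosSemidef ↔ s * k ≤ c := by
  constructor
  · intro hY
    obtain ⟨v, hv, hvsum⟩ :=
      exists_ne_zero_sum_eq_zero (R := ℂ) (ι := Fin n) (by rw [Fintype.card_fin]; omega)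
    obtain ⟨i, hi⟩ := Function.ne_iff.mp hv
    have hx : (fun p : Fin n × Fin k => v p.1 * (1 : Fin k → ℂ) p.2) ≠ 0 :=
      fun h => hi (by simpa using congrFun h (i, ⟨0, hk⟩))
    exact sub_nonneg.mp <|
      hY.nonneg_of_mulVec_eq_smul (μ := c - s * k) hx
        (block_identity_allOnes_mulVec_of_sum_eq_zero c s hvsum)
  · intro h
    have hs' : (0 : ℂ) ≤ s := Complex.zero_le_real.mpr hs
    rw [block_identity_allOnes_eq]
    refine .add (.add ?_ ?_) ?_
    · exact (PosSemidef.one.kronecker .one).smul (by exact_mod_cast sub_nonneg.mpr h)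
    · exact (PosSemidef.one.kronecker posSemidef_natCast_smul_one_sub_allOnes).smul hs'
    · exact (posSemidef_allOnes.kronecker posSemidef_allOnes).smul hs'

/-- The block matrix `Y = I_n ⊗ (c·I_k) + (J_n − I_n) ⊗ (s·J_k)` (diagonal blocks `c·I_k`,
off-diagonal blocks `s·J_k`, with `c, s ≥ 0`) is positive semidefinite iff `c ≥ s·k`. -/
theorem posSemidef_block_identity_allOnes_iff (n k : ℕ) (hn : 2 ≤ n) (hk : 1 ≤ k)
    (c s : ℝ) (hc : 0 ≤ c) (hs : 0 ≤ s) :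
    ((1 : Matrix (Fin n) (Fin n) ℂ) ⊗ₖ ((c : ℂ) • (1 : Matrix (Fin k) (Fin k) ℂ))
      + (allOnes n - 1) ⊗ₖ ((s : ℂ) • allOnes k)).PosSemidef ↔ s * k ≤ c :=
  posSemidef_block_identity_allOnes_iff_general n k hn hk c s hs
end

section
/- Let n ≥ 1 and k ≥ 1 be natural numbers and let c, s be real numbers. The characteristic polynomial of the (n·k)×(n·k) real matrix M = I_n ⊗ (c·I_k) + (J_n − I_n) ⊗ (s·J_k) equals (X − (c + (n−1)·s·k)) · (X − (c − s·k))^{n−1} · (X − c)^{n·(k−1)}, where I_m denotes the m×m identity matrix, J_m the m×m all-ones matrix, and ⊗ the Kronecker product. -/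
open Matrix Polynomial
open scoped Kronecker

/-- The `m × m` all-ones real matrix. -/
def allOnesR (m : ℕ) : Matrix (Fin m) (Fin m) ℝ := Matrix.of fun _ _ => 1

/-!
Let `U` be the matrix whose columns are the all-ones vector and the differences `e_j - e_0`.
Since `J_n` has eigenvalue `n` on the first and `0` on the others, conjugating by `U ⊗ I`
turns `I ⊗ A + (J_n - I) ⊗ B` into the block-diagonal matrix with blocks `A + (n - 1) B`
and `n - 1` copies of `A - B`. With `A = c I` and `B = s J_k` every block has the form
`c I + t J_k`, a shift of the rank-one matrix `t J_k`, whose characteristic polynomial is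
`X ^ (k - 1) * (X - t k)`.
-/

theorem SemiconjBy.kronecker {m n R : Type*} [Fintype m] [Fintype n] [CommSemiring R]
    {U A A' : Matrix m m R} {V B B' : Matrix n n R}
    (hA : SemiconjBy U A A') (hB : SemiconjBy V B B') :
    SemiconjBy (U ⊗ₖ V) (A ⊗ₖ B) (A' ⊗ₖ B') := by
  rw [SemiconjBy, ← mul_kronecker_mul, ← mul_kronecker_mul, hA.eq, hB.eq]

namespace Matrix

variable {ι R : Type*} [Fintype ι] [DecidableEq ι] [CommRing R]

theorem charpoly_eq_of_semiconjBy {U V A B : Matrix ι ι R} (hVU : V * U = 1)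
    (h : SemiconjBy U A B) : B.charpoly = A.charpoly := by
  have hB : B = U * (A * V) := by
    rw [← mul_assoc, h.eq, mul_assoc, mul_eq_one_comm.mp hVU, mul_one]
  rw [hB, charpoly_mul_comm, mul_assoc, hVU, mul_one]

theorem charmatrix_blockDiagonal {o : Type*} [Fintype o] [DecidableEq o]
    (d : o → Matrix ι ι R) :
    charmatrix (blockDiagonal d) = blockDiagonal fun i => charmatrix (d i) := by
  ext ⟨i, a⟩ ⟨j, b⟩ : 1
  by_cases hab : a = b <;> by_cases hij : i = j <;> simp [blockDiagonal_apply, hab, hij]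

theorem charpoly_blockDiagonal {o : Type*} [Fintype o] [DecidableEq o] (d : o → Matrix ι ι R) :
    (blockDiagonal d).charpoly = ∏ i, (d i).charpoly := by
  rw [charpoly, charmatrix_blockDiagonal, det_blockDiagonal]
  rfl

theorem charpoly_one_kronecker_add_diagonal_kronecker {o : Type*} [Fintype o] [DecidableEq o]
    (e : o → R) (A B : Matrix ι ι R) :
    ((1 : Matrix o o R) ⊗ₖ A + diagonal e ⊗ₖ B).charpoly = ∏ i, (A + e i • B).charpoly := by
  have hblock : (1 : Matrix o o R) ⊗ₖ A + diagonal e ⊗ₖ B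
      = reindex (Equiv.prodComm ι o) (Equiv.prodComm ι o)
          (blockDiagonal fun i => A + e i • B) := by
    ext ⟨a, i⟩ ⟨b, j⟩
    by_cases hab : a = b <;> simp [blockDiagonal_apply, hab]
  rw [hblock, charpoly_reindex, charpoly_blockDiagonal]

theorem charpoly_smul_one_add_smul_allOnes [Nonempty ι] (c t : R) :
    (c • (1 : Matrix ι ι R) + t • of fun _ _ => 1).charpoly
      = (X - C (c + t * Fintype.card ι)) * (X - C c) ^ (Fintype.card ι - 1) := by
  have hrankOne : c • (1 : Matrix ι ι R) + (t • of fun _ _ => 1)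
      = vecMulVec (fun _ => t) (fun _ => 1) - scalar ι (-c) := by
    ext i j
    by_cases hij : i = j <;> simp [vecMulVec_apply, hij, add_comm]
  have hdot : (fun _ => t) ⬝ᵥ (fun _ : ι => (1 : R)) = t * Fintype.card ι := by
    simp [dotProduct, mul_comm]
  obtain ⟨m, hm⟩ : ∃ m, Fintype.card ι = m + 1 := Nat.exists_eq_add_one.mpr Fintype.card_pos
  rw [hrankOne, charpoly_sub_scalar, charpoly_vecMulVec, hdot, hm, add_tsub_cancel_right,
    smul_eq_C_mul, sub_comp, mul_comp, pow_comp, pow_comp, X_comp, C_comp]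
  simp only [map_neg, map_add, map_mul, map_natCast]
  ring

def allOnesEigenvectors (n : ℕ) : Matrix (Fin (n + 1)) (Fin (n + 1)) R :=
  of fun i j => if j = 0 then 1 else (if i = j then 1 else 0) - (if i = 0 then 1 else 0)

theorem semiconjBy_allOnesEigenvectors (n : ℕ) :
    SemiconjBy (allOnesEigenvectors n) (diagonal (Pi.single 0 ((n : R) + 1)))
      (of fun _ _ => 1) := by
  ext i j
  rw [mul_diagonal, mul_apply]
  by_cases hj : j = 0 <;> simp [allOnesEigenvectors, hj, Finset.sum_sub_distrib]

section Field

variable {K : Type*} [Field K]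

def allOnesEigenvectorsInv (n : ℕ) : Matrix (Fin (n + 1)) (Fin (n + 1)) K :=
  of fun i j => (if i = 0 then 1 else -1) / ((n : K) + 1) + (if i = j ∧ i ≠ 0 then 1 else 0)

theorem allOnesEigenvectorsInv_mul_allOnesEigenvectors {n : ℕ} (h : (n : K) + 1 ≠ 0) :
    allOnesEigenvectorsInv n * allOnesEigenvectors n
      = (1 : Matrix (Fin (n + 1)) (Fin (n + 1)) K) := by
  ext i l
  rw [mul_apply]
  by_cases hl : l = 0 <;> by_cases hi : i = 0 <;>
    simp [allOnesEigenvectorsInv, allOnesEigenvectors, hi, hl, eq_comm (a := (0 : Fin (n + 1))),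
      mul_sub, one_apply, Finset.sum_add_distrib, Finset.sum_sub_distrib, neg_div,
      mul_inv_cancel₀ h]

theorem charpoly_one_kronecker_add_allOnes_sub_one_kronecker {n : ℕ} (h : (n : K) + 1 ≠ 0)
    (A B : Matrix ι ι K) :
    ((1 : Matrix (Fin (n + 1)) (Fin (n + 1)) K) ⊗ₖ A + ((of fun _ _ => 1) - 1) ⊗ₖ B).charpoly
      = (A + (n : K) • B).charpoly * (A - B).charpoly ^ n := by
  have hconj : SemiconjBy (allOnesEigenvectors n ⊗ₖ 1)
      (1 ⊗ₖ A + diagonal (Pi.single 0 ((n : K) + 1) - 1) ⊗ₖ B)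
      ((1 : Matrix (Fin (n + 1)) (Fin (n + 1)) K) ⊗ₖ A + ((of fun _ _ => 1) - 1) ⊗ₖ B) := by
    have hD : (diagonal (Pi.single 0 ((n : K) + 1) - 1) : Matrix (Fin (n + 1)) (Fin (n + 1)) K)
        = diagonal (Pi.single 0 ((n : K) + 1)) - 1 := by
      rw [← diagonal_one, diagonal_sub]
      rfl
    rw [hD]
    exact (SemiconjBy.one_right _ |>.kronecker (Commute.one_left A)).add_right
      ((semiconjBy_allOnesEigenvectors n).sub_right (.one_right _)
        |>.kronecker (Commute.one_left B))
  have hinv :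
      (allOnesEigenvectorsInv n ⊗ₖ (1 : Matrix ι ι K)) * (allOnesEigenvectors n ⊗ₖ 1) = 1 := by
    rw [← mul_kronecker_mul, allOnesEigenvectorsInv_mul_allOnesEigenvectors h, mul_one,
      one_kronecker_one]
  rw [charpoly_eq_of_semiconjBy hinv hconj, charpoly_one_kronecker_add_diagonal_kronecker,
    Fin.prod_univ_succ]
  simp [sub_eq_add_neg]

end Field

end Matrix

/-- The characteristic polynomial of `M = I_n ⊗ (c·I_k) + (J_n − I_n) ⊗ (s·J_k)` equals
`(X − (c + (n−1)·s·k)) · (X − (c − s·k))^{n−1} · (X − c)^{n·(k−1)}`. -/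
theorem charpoly_block_identity_allOnes (n k : ℕ) (hn : 1 ≤ n) (hk : 1 ≤ k)
    (c s : ℝ) :
    ((1 : Matrix (Fin n) (Fin n) ℝ) ⊗ₖ (c • (1 : Matrix (Fin k) (Fin k) ℝ))
      + (allOnesR n - 1) ⊗ₖ (s • allOnesR k)).charpoly
    = (X - C (c + ((n : ℝ) - 1) * s * k)) * (X - C (c - s * k)) ^ (n - 1)
        * (X - C c) ^ (n * (k - 1)) := by
  obtain ⟨n, rfl⟩ := Nat.exists_eq_add_one.mpr hn
  have : NeZero k := ⟨by omega⟩
  rw [allOnesR, allOnesR, charpoly_one_kronecker_add_allOnes_sub_one_kronecker (by positivity),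
    smul_smul, sub_eq_add_neg, ← neg_smul, charpoly_smul_one_add_smul_allOnes,
    charpoly_smul_one_add_smul_allOnes, Fintype.card_fin, mul_pow, ← pow_mul]
  simp only [Nat.cast_add, Nat.cast_one, add_sub_cancel_right, add_tsub_cancel_right, neg_mul,
    ← sub_eq_add_neg]
  ring
end

section
/- Let D ≥ 1, let φ = (1/√D)·∑_{i=1}^{D} e_i ⊗ e_i ∈ ℂ^D ⊗ ℂ^D be the maximally entangled unit vector, and let P = φ·φᴴ be the corresponding density matrix. Then for every separable state σ on ℂ^D ⊗ ℂ^D (an element of the convex hull over ℝ of Kronecker products σ₁ ⊗ σ₂ of two D×D density matrices), the trace distance satisfies (1/2)·‖P − σ‖₁ ≥ 1 − 1/D. -/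
open Matrix
open scoped Kronecker ComplexOrder

/-- The trace norm of a complex square matrix on an index type `ι`:
`‖X‖₁ = tr[(X·Xᴴ)^{1/2}]`. -/
noncomputable def traceNorm' {ι : Type*} [Fintype ι] [DecidableEq ι]
    (X : Matrix ι ι ℂ) : ℝ :=
  (((Matrix.posSemidef_self_mul_conjTranspose X).1.eigenvectorUnitary.1 *
      diagonal (((↑) : ℝ → ℂ) ∘ (Real.sqrt ·) ∘ (Matrix.posSemidef_self_mul_conjTranspose X).1.eigenvalues) *
      (star (Matrix.posSemidef_self_mul_conjTranspose X).1.eigenvectorUnitary : Matrix ι ι ℂ)).trace).re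

/-- A density matrix: positive semidefinite with trace 1. -/
def IsDensityMatrix {m : Type*} [Fintype m] (ρ : Matrix m m ℂ) : Prop :=
  ρ.PosSemidef ∧ ρ.trace = 1

/-- A state on `ℂ^m ⊗ ℂ^k` is separable if it lies in the real convex hull of Kronecker
products of density matrices. -/
def IsSeparableState {m k : ℕ} (σ : Matrix (Fin m × Fin k) (Fin m × Fin k) ℂ) : Prop :=
  σ ∈ convexHull ℝ {M | ∃ (σ₁ : Matrix (Fin m) (Fin m) ℂ) (σ₂ : Matrix (Fin k) (Fin k) ℂ),
      IsDensityMatrix σ₁ ∧ IsDensityMatrix σ₂ ∧ M = σ₁ ⊗ₖ σ₂}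

/-- The maximally entangled unit vector `φ = (1/√D)·∑ᵢ eᵢ ⊗ eᵢ` in `ℂ^D ⊗ ℂ^D`. -/
noncomputable def maxEntangledVec (D : ℕ) : Fin D × Fin D → ℂ :=
  fun p => if p.1 = p.2 then (1 / Real.sqrt D : ℝ) else 0

/-!
Write `φ = maxEntangledVec D`, `P = φ φᴴ` and `X = P - σ`. Since `X` is Hermitian of trace zero,
`X ≤ X⁺` and `tr X⁺ = (‖X‖₁ + tr X) / 2 = ‖X‖₁ / 2`, so `⟨φ, X φ⟩ ≤ ‖X‖₁ / 2`. On the other hand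
`⟨φ, P φ⟩ = 1`, and `⟨φ, σ φ⟩ ≤ 1 / D` for separable `σ`: for a product state `σ₂ ≤ 1` gives
`⟨φ, (σ₁ ⊗ σ₂) φ⟩ ≤ ⟨φ, (σ₁ ⊗ 1) φ⟩ = tr σ₁ / D`, and the bound is a half-space condition,
hence passes to convex combinations.
-/

open scoped MatrixOrder

section TraceNorm

variable {ι : Type*} [Fintype ι]

lemma re_star_dotProduct_self (v : ι → ℂ) :
    (star v ⬝ᵥ v).re = ∑ i, Complex.normSq (v i) := by
  simp [dotProduct, Complex.re_sum, Complex.normSq_apply, Complex.mul_re]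

variable [DecidableEq ι]

lemma Matrix.star_mulVec_dotProduct_mulVec_of_mem_unitaryGroup {U : Matrix ι ι ℂ}
    (hU : U ∈ Matrix.unitaryGroup ι ℂ) (x : ι → ℂ) :
    star (U *ᵥ x) ⬝ᵥ (U *ᵥ x) = star x ⬝ᵥ x := by
  rw [star_mulVec, ← dotProduct_mulVec, mulVec_mulVec, ← star_eq_conjTranspose,
    Matrix.mem_unitaryGroup_iff'.mp hU, one_mulVec]

lemma Matrix.IsHermitian.re_star_dotProduct_mulVec {A : Matrix ι ι ℂ} (hA : A.IsHermitian)
    (x : ι → ℂ) :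
    (star x ⬝ᵥ (A *ᵥ x)).re = ∑ i, hA.eigenvalues i *
      Complex.normSq ((star (hA.eigenvectorUnitary : Matrix ι ι ℂ) *ᵥ x) i) := by
  have hψ : star (star (hA.eigenvectorUnitary : Matrix ι ι ℂ) *ᵥ x) =
      star x ᵥ* (hA.eigenvectorUnitary : Matrix ι ι ℂ) := by
    simp [star_mulVec, Matrix.star_eq_conjTranspose]
  conv_lhs => rw [hA.spectral_theorem, Unitary.conjStarAlgAut_apply]
  rw [← mulVec_mulVec, ← mulVec_mulVec, dotProduct_mulVec, ← hψ]
  simp only [dotProduct, Pi.star_apply, RCLike.star_def, Complex.coe_algebraMap, mulVec_diagonal,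
    Function.comp_apply, Complex.re_sum, Complex.mul_re, Complex.conj_re, Complex.ofReal_re,
    Complex.ofReal_im, zero_mul, sub_zero, Complex.conj_im, Complex.mul_im, add_zero, neg_mul,
    sub_neg_eq_add, Complex.normSq_apply]
  exact Finset.sum_congr rfl fun i _ => by ring

lemma Matrix.PosSemidef.re_star_dotProduct_mulVec_le {A : Matrix ι ι ℂ} (hA : A.PosSemidef)
    (x : ι → ℂ) : (star x ⬝ᵥ (A *ᵥ x)).re ≤ A.trace.re * (star x ⬝ᵥ x).re := by
  set ψ := star (hA.1.eigenvectorUnitary : Matrix ι ι ℂ) *ᵥ x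
  have hψ : (star x ⬝ᵥ x).re = ∑ i, Complex.normSq (ψ i) := by
    rw [← re_star_dotProduct_self, Matrix.star_mulVec_dotProduct_mulVec_of_mem_unitaryGroup
      (Unitary.star_mem hA.1.eigenvectorUnitary.2)]
  have htr : A.trace.re = ∑ i, hA.1.eigenvalues i := by
    simp [hA.1.trace_eq_sum_eigenvalues, Complex.re_sum]
  rw [hA.1.re_star_dotProduct_mulVec, hψ, htr, Finset.sum_mul]
  gcongr with i
  · exact hA.eigenvalues_nonneg i
  · exact Finset.single_le_sum (fun j _ => Complex.normSq_nonneg (ψ j)) (Finset.mem_univ i)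

lemma traceNorm'_eq_re_trace_abs_conjTranspose (X : Matrix ι ι ℂ) :
    traceNorm' X = (CFC.abs Xᴴ).trace.re := by
  have hM := Matrix.posSemidef_self_mul_conjTranspose X
  have habs : CFC.abs Xᴴ = hM.1.cfc Real.sqrt := by
    rw [CFC.abs, Matrix.star_eq_conjTranspose, conjTranspose_conjTranspose,
      CFC.sqrt_eq_real_sqrt _ hM.nonneg, cfcₙ_eq_cfc, hM.1.cfc_eq]
  rw [habs, Matrix.IsHermitian.cfc, Unitary.conjStarAlgAut_apply]
  rfl

lemma Matrix.IsHermitian.traceNorm'_eq {X : Matrix ι ι ℂ} (hX : X.IsHermitian) :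
    traceNorm' X = (CFC.abs X).trace.re := by
  rw [traceNorm'_eq_re_trace_abs_conjTranspose, hX.eq]

lemma Matrix.IsHermitian.re_star_dotProduct_mulVec_le_traceNorm' {X : Matrix ι ι ℂ}
    (hX : X.IsHermitian) (x : ι → ℂ) :
    (star x ⬝ᵥ (X *ᵥ x)).re ≤ (traceNorm' X + X.trace.re) / 2 * (star x ⬝ᵥ x).re := by
  have hle_posPart : (star x ⬝ᵥ (X *ᵥ x)).re ≤ (star x ⬝ᵥ (X⁺ *ᵥ x)).re := by
    conv_lhs => rw [← CFC.posPart_sub_negPart X hX]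
    rw [sub_mulVec, dotProduct_sub, Complex.sub_re, sub_le_self_iff]
    exact (CFC.negPart_nonneg X).posSemidef.re_dotProduct_nonneg x
  have htr : X⁺.trace.re = (traceNorm' X + X.trace.re) / 2 := by
    rw [hX.traceNorm'_eq, ← Complex.add_re, ← trace_add, CFC.abs_add_self X hX, trace_smul]
    simp
  calc (star x ⬝ᵥ (X *ᵥ x)).re ≤ (star x ⬝ᵥ (X⁺ *ᵥ x)).re := hle_posPart
    _ ≤ X⁺.trace.re * (star x ⬝ᵥ x).re :=
      (CFC.posPart_nonneg X).posSemidef.re_star_dotProduct_mulVec_le x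
    _ = (traceNorm' X + X.trace.re) / 2 * (star x ⬝ᵥ x).re := by rw [htr]

end TraceNorm

section DensityMatrix

variable {m : Type*} [Fintype m]

lemma IsDensityMatrix.posSemidef_one_sub [DecidableEq m] {ρ : Matrix m m ℂ}
    (hρ : IsDensityMatrix ρ) : (1 - ρ).PosSemidef := by
  have hH : (1 - ρ).IsHermitian := isHermitian_one.sub hρ.1.1
  refine .of_dotProduct_mulVec_nonneg hH fun x => Complex.le_def.mpr ⟨?_, ?_⟩
  · have hle := hρ.1.re_star_dotProduct_mulVec_le x
    rw [hρ.2, Complex.one_re, one_mul] at hle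
    simpa [sub_mulVec, dotProduct_sub] using hle
  · exact (hH.im_star_dotProduct_mulVec_self x).symm

lemma IsDensityMatrix.kronecker {n : Type*} [Fintype n] {ρ₁ : Matrix m m ℂ}
    {ρ₂ : Matrix n n ℂ} (h₁ : IsDensityMatrix ρ₁) (h₂ : IsDensityMatrix ρ₂) :
    IsDensityMatrix (ρ₁ ⊗ₖ ρ₂) :=
  ⟨h₁.1.kronecker h₂.1, by rw [trace_kronecker, h₁.2, h₂.2, mul_one]⟩

lemma convex_setOf_isDensityMatrix : Convex ℝ {ρ : Matrix m m ℂ | IsDensityMatrix ρ} := by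
  intro ρ hρ τ hτ a b ha hb hab
  refine ⟨(hρ.1.smul ha).add (hτ.1.smul hb), ?_⟩
  rw [trace_add, trace_smul, trace_smul, hρ.2, hτ.2, ← add_smul, hab, one_smul]

lemma IsSeparableState.isDensityMatrix {m k : ℕ} {σ : Matrix (Fin m × Fin k) (Fin m × Fin k) ℂ}
    (hσ : IsSeparableState σ) : IsDensityMatrix σ := by
  refine convexHull_min ?_ convex_setOf_isDensityMatrix hσ
  rintro _ ⟨σ₁, σ₂, h₁, h₂, rfl⟩
  exact h₁.kronecker h₂

end DensityMatrix

section MaxEntangled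

variable {D : ℕ}

lemma star_maxEntangledVec_dotProduct_mulVec (M : Matrix (Fin D × Fin D) (Fin D × Fin D) ℂ) :
    star (maxEntangledVec D) ⬝ᵥ (M *ᵥ maxEntangledVec D) = (∑ i, ∑ j, M (i, i) (j, j)) / D := by
  have hsq : star ((1 / Real.sqrt D : ℝ) : ℂ) * ((1 / Real.sqrt D : ℝ) : ℂ) = 1 / D := by
    rw [Complex.star_def, Complex.conj_ofReal, ← Complex.ofReal_mul, div_mul_div_comm, one_mul,
      Real.mul_self_sqrt (Nat.cast_nonneg D)]
    simp
  simp only [dotProduct, mulVec, maxEntangledVec, Fintype.sum_prod_type, Pi.star_apply,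
    Finset.mul_sum, apply_ite star, star_zero, ite_mul, mul_ite, zero_mul, mul_zero,
    Finset.sum_ite_irrel, Finset.sum_const_zero, Finset.sum_ite_eq, Finset.mem_univ, if_true,
    Finset.sum_div]
  refine Finset.sum_congr rfl fun i _ => Finset.sum_congr rfl fun j _ => ?_
  linear_combination M (i, i) (j, j) * hsq

lemma star_maxEntangledVec_dotProduct_self (hD : D ≠ 0) :
    star (maxEntangledVec D) ⬝ᵥ maxEntangledVec D = 1 := by
  have h := star_maxEntangledVec_dotProduct_mulVec (D := D) 1
  simp only [one_mulVec, one_apply, Prod.mk.injEq, and_self, Finset.sum_ite_eq, Finset.mem_univ,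
    if_true, Finset.sum_const, Finset.card_univ, Fintype.card_fin, nsmul_eq_mul, mul_one] at h
  simpa [hD] using h

lemma star_maxEntangledVec_dotProduct_kronecker_one_mulVec (A : Matrix (Fin D) (Fin D) ℂ) :
    star (maxEntangledVec D) ⬝ᵥ ((A ⊗ₖ 1) *ᵥ maxEntangledVec D) = A.trace / D := by
  simp [star_maxEntangledVec_dotProduct_mulVec, one_apply, trace]

lemma re_star_maxEntangledVec_dotProduct_kronecker_mulVec_le {σ₁ σ₂ : Matrix (Fin D) (Fin D) ℂ}
    (h₁ : IsDensityMatrix σ₁) (h₂ : IsDensityMatrix σ₂) :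
    (star (maxEntangledVec D) ⬝ᵥ ((σ₁ ⊗ₖ σ₂) *ᵥ maxEntangledVec D)).re ≤ 1 / D := by
  set φ := maxEntangledVec D
  have hsplit : σ₁ ⊗ₖ 1 = σ₁ ⊗ₖ σ₂ + σ₁ ⊗ₖ (1 - σ₂) := by
    rw [← kronecker_add, add_sub_cancel]
  calc (star φ ⬝ᵥ ((σ₁ ⊗ₖ σ₂) *ᵥ φ)).re
      ≤ (star φ ⬝ᵥ ((σ₁ ⊗ₖ σ₂) *ᵥ φ)).re + (star φ ⬝ᵥ ((σ₁ ⊗ₖ (1 - σ₂)) *ᵥ φ)).re :=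
        le_add_of_nonneg_right ((h₁.1.kronecker h₂.posSemidef_one_sub).re_dotProduct_nonneg φ)
    _ = (star φ ⬝ᵥ ((σ₁ ⊗ₖ 1) *ᵥ φ)).re := by
        rw [hsplit, add_mulVec, dotProduct_add, Complex.add_re]
    _ = 1 / D := by
        rw [star_maxEntangledVec_dotProduct_kronecker_one_mulVec, h₁.2]
        simp

lemma IsSeparableState.re_star_maxEntangledVec_dotProduct_mulVec_le {σ : Matrix (Fin D × Fin D) (Fin D × Fin D) ℂ} (hσ : IsSeparableState σ) :
    (star (maxEntangledVec D) ⬝ᵥ (σ *ᵥ maxEntangledVec D)).re ≤ 1 / D := by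
  have hlin : IsLinearMap ℝ fun M : Matrix (Fin D × Fin D) (Fin D × Fin D) ℂ =>
      (star (maxEntangledVec D) ⬝ᵥ (M *ᵥ maxEntangledVec D)).re :=
    ⟨fun M N => by simp [add_mulVec], fun c M => by simp [smul_mulVec]⟩
  refine convexHull_min ?_ (convex_halfSpace_le hlin _) hσ
  rintro _ ⟨σ₁, σ₂, h₁, h₂, rfl⟩
  exact re_star_maxEntangledVec_dotProduct_kronecker_mulVec_le h₁ h₂

end MaxEntangled

/-- The maximally entangled state `P = φ·φᴴ` is at trace distance at least `1 − 1/D`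
from every separable state. -/
theorem traceDist_maxEntangled_separable_ge (D : ℕ) (hD : 1 ≤ D)
    (σ : Matrix (Fin D × Fin D) (Fin D × Fin D) ℂ) (hσ : IsSeparableState σ) :
    (1 / 2) * traceNorm' (Matrix.vecMulVec (maxEntangledVec D) (star (maxEntangledVec D)) - σ)
      ≥ 1 - 1 / D := by
  set φ := maxEntangledVec D
  set P := vecMulVec φ (star φ)
  have hφ : star φ ⬝ᵥ φ = 1 := star_maxEntangledVec_dotProduct_self (by omega)
  have hdens := hσ.isDensityMatrix
  have hX : (P - σ).IsHermitian := (posSemidef_vecMulVec_self_star φ).1.sub hdens.1.1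
  have htr : (P - σ).trace = 0 := by
    rw [trace_sub, trace_vecMulVec, dotProduct_comm, hφ, hdens.2, sub_self]
  have hPφ : star φ ⬝ᵥ (P *ᵥ φ) = 1 := by
    rw [vecMulVec_mulVec, hφ]
    simpa using hφ
  have hmain := hX.re_star_dotProduct_mulVec_le_traceNorm' φ
  rw [htr, hφ, sub_mulVec, dotProduct_sub, hPφ] at hmain
  have hsep := hσ.re_star_maxEntangledVec_dotProduct_mulVec_le
  simp only [Complex.sub_re, Complex.one_re, Complex.zero_re, add_zero, mul_one] at hmain
  linarith
end
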